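/- arXiv:2301.09405 — 7 statements merged into one kernel-verified Lean document; each statement's English description precedes it below -/
import Mathlib

section
/- Let x : [0,1] → ℝ^d be a path that is d-times continuously differentiable on (0,1) and continuous on [0,1], and suppose x has totally positive torsion, i.e., for every t ∈ (0,1) all leading principal minors of the d×d matrix whose columns are x'(t), x''(t), …, x^(d)(t) are strictly positive. Then x satisfies the strictly positive determinant condition: det(x'(t_1), …, x'(t_d)) > 0 for all 0 < t_1 < … < t_d < 1. -/
open MeasureTheory Set Filter

noncomputable section

/-- The ordered `k`-simplex `{0 ≤ t 0 < t 1 < ⋯ < t (k-1) ≤ 1}`. -/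
def orderedSimplex (k : ℕ) : Set (Fin k → ℝ) :=
  {t | StrictMono t ∧ ∀ i, t i ∈ Icc (0 : ℝ) 1}

/-- The level-`d` alternating signature
`α^(d)(x) = (1/d!) ∫_{Δ^d} det(x'(t₁), …, x'(t_d)) dt`. -/
def altSig (d : ℕ) (x : ℝ → Fin d → ℝ) : ℝ :=
  (1 / (Nat.factorial d : ℝ)) *
    ∫ t in orderedSimplex d, Matrix.det (Matrix.of fun i j => deriv x (t j) i)

/-- A `d`-order path: the determinant of the `(d+1) × (d+1)` matrix whose columns are
`(1, x(t_j))` is positive for all increasing `0 ≤ t₀ < ⋯ < t_d ≤ 1`. -/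
def IsDOrderPath (d : ℕ) (x : ℝ → Fin d → ℝ) : Prop :=
  ∀ t : Fin (d + 1) → ℝ, StrictMono t → (∀ i, t i ∈ Icc (0 : ℝ) 1) →
    0 < Matrix.det (Matrix.of fun i j => Fin.cons (1 : ℝ) (x (t j)) i)

/-- A cyclic path: a uniform limit on `[0,1]` of Lipschitz `d`-order paths with
uniformly bounded Lipschitz constants. -/
def IsCyclicPath (d : ℕ) (x : ℝ → Fin d → ℝ) : Prop :=
  ∃ (y : ℕ → ℝ → Fin d → ℝ) (K : NNReal),
    (∀ n, LipschitzOnWith K (y n) (Icc 0 1)) ∧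
    (∀ n, IsDOrderPath d (y n)) ∧
    TendstoUniformlyOn y x atTop (Icc 0 1)

/-!
The columns `x'(t_j)` are values of the functions `f_i = x_i'`, and the leading principal minors
of the torsion matrix are the Wronskians `W(f_0, …, f_k)`. Functions whose leading Wronskians are
positive on an interval form a Chebyshev system: `det (f_i(t_j)) > 0` whenever
`t_0 < ⋯ < t_{n-1}`. By induction on `n`: `f_0 = W(f_0) > 0`; dividing by `f_0` and subtracting
adjacent columns turns `det (f_i(t_j))` into `∏ f_0(t_j)` times the determinant of the integrals
`∫_{t_j}^{t_{j+1}} g_i` with `g_i = (f_{i+1}/f_0)'`. The identity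
`W(f_0, …, f_k) = f_0^{k+1} W(g_0, …, g_{k-1})` passes the hypothesis on to the `g_i`, so the
determinants `det (g_i(u_j))`, `t_j < u_j < t_{j+1}`, are positive by induction; by
multilinearity, integrating one column at a time keeps the determinant positive.
-/

open Topology

theorem iteratedDeriv_pi_apply {𝕜 ι F : Type*} [NontriviallyNormedField 𝕜] [Fintype ι]
    [NormedAddCommGroup F] [NormedSpace 𝕜 F] {f : 𝕜 → ι → F} {n : WithTop ℕ∞} {k : ℕ} {t : 𝕜}
    (hf : ContDiffAt 𝕜 n f t) (hk : k ≤ n) (i : ι) :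
    iteratedDeriv k f t i = iteratedDeriv k (fun y => f y i) t := by
  have := (ContinuousLinearMap.proj (R := 𝕜) (φ := fun _ : ι => F) i).iteratedFDeriv_comp_left
    hf hk
  simp only [iteratedDeriv_eq_iteratedFDeriv]
  exact (congrArg (fun L => L fun _ => (1 : 𝕜)) this).symm

section Wronskian

variable {𝕜 : Type*} [NontriviallyNormedField 𝕜]

def wronskian {n : ℕ} (f : Fin n → 𝕜 → 𝕜) (t : 𝕜) : 𝕜 :=
  (Matrix.of fun i j : Fin n => iteratedDeriv i (f j) t).det

theorem wronskian_congr {n : ℕ} {f g : Fin n → 𝕜 → 𝕜} {t : 𝕜} (hfg : ∀ j, f j =ᶠ[𝓝 t] g j) :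
    wronskian f t = wronskian g t := by
  unfold wronskian
  congr 1
  ext i j
  exact (hfg j).iteratedDeriv_eq i

theorem wronskian_mul {m : ℕ} {c : 𝕜 → 𝕜} {u : Fin (m + 1) → 𝕜 → 𝕜} {t : 𝕜}
    (hc : ContDiffAt 𝕜 m c t) (hu : ∀ j, ContDiffAt 𝕜 m (u j) t) :
    wronskian (fun j y => c y * u j y) t = c t ^ (m + 1) * wronskian u t := by
  -- Leibniz' rule: the Wronskian matrix of `c * u` is `L` times that of `u`
  let L : Matrix (Fin (m + 1)) (Fin (m + 1)) 𝕜 :=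
    Matrix.of fun i q => ((i : ℕ).choose q : 𝕜) * iteratedDeriv (i - q) c t
  have hL : L.det = c t ^ (m + 1) := by
    rw [Matrix.det_of_isLowerTriangular L fun i q (hiq : i < q) => by
      simp [L, Nat.choose_eq_zero_of_lt hiq]]
    simp [L]
  have hmul : (Matrix.of fun i j : Fin (m + 1) => iteratedDeriv i (fun y => c y * u j y) t) =
      L * Matrix.of fun i j : Fin (m + 1) => iteratedDeriv i (u j) t := by
    ext i j
    have hi : (i : ℕ) ≤ m := Nat.lt_succ_iff.mp i.isLt
    simp_rw [Matrix.mul_apply, Matrix.of_apply, mul_comm (c _)]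
    change _ = ∑ q : Fin (m + 1),
      ((i : ℕ).choose q : 𝕜) * iteratedDeriv (i - q) c t * iteratedDeriv q (u j) t
    rw [iteratedDeriv_fun_mul ((hu j).of_le (by exact_mod_cast hi))
        (hc.of_le (by exact_mod_cast hi)),
      Fin.sum_univ_eq_sum_range
        (fun q => ((i : ℕ).choose q : 𝕜) * iteratedDeriv (i - q) c t * iteratedDeriv q (u j) t),
      ← Finset.sum_subset (Finset.range_subset_range.mpr (Nat.succ_le_succ hi)) fun q _ hq => by
        simp [Nat.choose_eq_zero_of_lt (by simpa using hq : (i : ℕ) < q)]]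
    exact Finset.sum_congr rfl fun q _ => by ring
  unfold wronskian
  rw [hmul, Matrix.det_mul, hL]

theorem wronskian_eq_wronskian_deriv_of_eventuallyEq_one {m : ℕ} {h : Fin (m + 1) → 𝕜 → 𝕜}
    {t : 𝕜} (h0 : h 0 =ᶠ[𝓝 t] fun _ => 1) :
    wronskian h t = wronskian (fun j : Fin m => deriv (h j.succ)) t := by
  unfold wronskian
  rw [Matrix.det_succ_column_zero, Fin.sum_univ_succ, Finset.sum_eq_zero fun i _ => by
    simp [h0.iteratedDeriv_eq, iteratedDeriv_const]]
  simp [h0.eq_of_nhds, Matrix.submatrix, iteratedDeriv_succ']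

theorem wronskian_eq_pow_mul_wronskian_deriv_div {m : ℕ} {f : Fin (m + 1) → 𝕜 → 𝕜} {t : 𝕜}
    (hf : ∀ j, ContDiffAt 𝕜 m (f j) t) (h0 : f 0 t ≠ 0) :
    wronskian f t =
      f 0 t ^ (m + 1) * wronskian (fun j : Fin m => deriv fun y => f j.succ y / f 0 y) t := by
  have hne : ∀ᶠ y in 𝓝 t, f 0 y ≠ 0 := (hf 0).continuousAt.eventually_ne h0
  calc wronskian f t = wronskian (fun j y => f 0 y * (f j y / f 0 y)) t :=
        wronskian_congr fun j => hne.mono fun y hy => (mul_div_cancel₀ _ hy).symm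
    _ = _ := by
        rw [wronskian_mul (u := fun j y => f j y / f 0 y) (hf 0) fun j => (hf j).div (hf 0) h0,
          wronskian_eq_wronskian_deriv_of_eventuallyEq_one (hne.mono fun y hy => div_self hy)]

theorem wronskian_take_deriv_eq_det_iteratedDeriv {d k : ℕ} {x : 𝕜 → Fin d → 𝕜} {y : 𝕜}
    (hx : ContDiffAt 𝕜 d x y) (hk : k ≤ d) :
    wronskian (Fin.take k hk fun i => deriv fun z => x z i) y =
      (Matrix.of fun i j : Fin k => iteratedDeriv ((j : ℕ) + 1) x y (Fin.castLE hk i)).det := by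
  rw [wronskian, ← Matrix.det_transpose]
  congr with i j
  simp only [Matrix.of_apply, Fin.take_apply, ← iteratedDeriv_succ']
  exact (iteratedDeriv_pi_apply hx (by exact_mod_cast (by omega : (i : ℕ) + 1 ≤ d)) _).symm

end Wronskian

theorem Matrix.det_eq_det_sub_of_row_zero_eq_one {R : Type*} [CommRing R] {n : ℕ}
    (A : Matrix (Fin (n + 1)) (Fin (n + 1)) R) (hA : ∀ j, A 0 j = 1) :
    A.det = (Matrix.of fun i j : Fin n => A i.succ j.succ - A i.succ j.castSucc).det := by
  let B : Matrix (Fin (n + 1)) (Fin (n + 1)) R :=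
    Matrix.of fun i => Fin.cases (A i 0) fun j => A i j.succ - A i j.castSucc
  have hAB : A.det = B.det :=
    Matrix.det_eq_of_forall_col_eq_smul_add_pred (fun _ => 1) (fun _ => rfl) fun _ _ => by
      simp [B]
  rw [hAB, Matrix.det_succ_row_zero, Fin.sum_univ_succ,
    Finset.sum_eq_zero fun j _ => by simp [B, hA]]
  simp [B, hA, Matrix.submatrix]

theorem MultilinearMap.apply_intervalIntegral_pos {ι E : Type*} [Fintype ι]
    [NormedAddCommGroup E] [NormedSpace ℝ E] [FiniteDimensional ℝ E]
    (F : MultilinearMap ℝ (fun _ : ι => E) ℝ) {v : ι → ℝ → E} {a b : ι → ℝ}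
    (hab : ∀ j, a j < b j) (hv : ∀ j, ContinuousOn (v j) (Icc (a j) (b j)))
    (hpos : ∀ u : ι → ℝ, (∀ j, u j ∈ Ioo (a j) (b j)) → 0 < F fun j => v j (u j)) :
    0 < F fun j => ∫ y in a j..b j, v j y := by
  classical
  suffices h : ∀ S : Finset ι, ∀ u : ι → ℝ, (∀ j ∉ S, u j ∈ Ioo (a j) (b j)) →
      0 < F fun j => if j ∈ S then ∫ y in a j..b j, v j y else v j (u j) by
    simpa using h Finset.univ a (by simp)
  intro S
  induction S using Finset.induction_on with
  | empty => simpa using hpos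
  | insert k S hk ih =>
    intro u hu
    set w : ι → E := fun j => if j ∈ insert k S then ∫ y in a j..b j, v j y else v j (u j)
    let L : E →L[ℝ] ℝ := LinearMap.toContinuousLinearMap (F.toLinearMap w k)
    have hint : IntervalIntegrable (v k) volume (a k) (b k) :=
      (hv k).intervalIntegrable_of_Icc (hab k).le
    have hLint : ∫ y in a k..b k, L (v k y) = F w := by
      have hwk : w k = ∫ y in a k..b k, v k y := by simp [w]
      rw [L.intervalIntegral_comp_comm hint, ← hwk]
      simp [L]
    have hLpos : ∀ y ∈ Ioo (a k) (b k), 0 < L (v k y) := by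
      intro y hy
      have hupd : Function.update w k (v k y) = fun j =>
          if j ∈ S then ∫ y in a j..b j, v j y else v j (Function.update u k y j) := by
        funext j
        by_cases hj : j = k
        · subst hj; simp [hk]
        · simp [w, hj]
      simpa [L, hupd] using ih (Function.update u k y) fun j hj => by
        by_cases hjk : j = k
        · subst hjk; simpa using hy
        · simpa [hjk] using hu j (by simp [hjk, hj])
    rw [← hLint]
    exact intervalIntegral.intervalIntegral_pos_of_pos_on
      ((L.continuous.comp_continuousOn (hv k)).intervalIntegrable_of_Icc (hab k).le) hLpos (hab k)

theorem det_sub_pos_of_det_deriv_pos {n : ℕ} {s : Set ℝ} (hs : IsOpen s) (hs' : s.OrdConnected)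
    {h : Fin n → ℝ → ℝ} (hh : ∀ i, ContDiffOn ℝ 1 (h i) s)
    (hpos : ∀ u : Fin n → ℝ, StrictMono u → (∀ j, u j ∈ s) →
      0 < (Matrix.of fun i j => deriv (h i) (u j)).det)
    {t : Fin (n + 1) → ℝ} (ht : StrictMono t) (hts : ∀ j, t j ∈ s) :
    0 < (Matrix.of fun i j : Fin n => h i (t j.succ) - h i (t j.castSucc)).det := by
  let H' : ℝ → Fin n → ℝ := fun y i => deriv (h i) y
  have hIcc : ∀ j : Fin n, Icc (t j.castSucc) (t j.succ) ⊆ s := fun j => hs'.out (hts _) (hts _)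
  have hH' : ContinuousOn H' s :=
    continuousOn_pi.mpr fun i => (hh i).continuousOn_deriv_of_isOpen hs le_rfl
  have hftc : ∀ j : Fin n, ∫ y in t j.castSucc..t j.succ, H' y =
      fun i => h i (t j.succ) - h i (t j.castSucc) := by
    intro j
    have hle : t j.castSucc ≤ t j.succ := ht.monotone (Fin.castSucc_le_succ j)
    refine intervalIntegral.integral_eq_sub_of_hasDerivAt (f := fun y i => h i y)
      (fun y hy => hasDerivAt_pi.mpr fun i => ?_)
      ((hH'.mono (hIcc j)).intervalIntegrable_of_Icc hle)
    have hys : y ∈ s := hIcc j (by rwa [uIcc_of_le hle] at hy)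
    exact (((hh i).differentiableOn one_ne_zero).differentiableAt (hs.mem_nhds hys)).hasDerivAt
  have hdet : (Matrix.of fun i j : Fin n => h i (t j.succ) - h i (t j.castSucc)).det =
      Matrix.detRowAlternating fun j => ∫ y in t j.castSucc..t j.succ, H' y := by
    rw [← Matrix.det_transpose]
    simp_rw [hftc]
    rfl
  rw [hdet]
  refine MultilinearMap.apply_intervalIntegral_pos Matrix.detRowAlternating.toMultilinearMap
    (fun j => ht Fin.castSucc_lt_succ) (fun j => hH'.mono (hIcc j)) fun u hu => ?_
  have hu_mono : StrictMono u := fun j₁ j₂ hj =>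
    (hu j₁).2.trans ((ht.monotone (Fin.succ_le_castSucc_iff.mpr hj)).trans_lt (hu j₂).1)
  have := hpos u hu_mono fun j => hIcc j (Ioo_subset_Icc_self (hu j))
  rwa [← Matrix.det_transpose] at this

theorem det_pos_of_wronskian_pos {n : ℕ} {s : Set ℝ} (hs : IsOpen s) (hs' : s.OrdConnected)
    {f : Fin n → ℝ → ℝ} (hf : ∀ i, ContDiffOn ℝ (n - 1 : ℕ) (f i) s)
    (hW : ∀ m (hm : m ≤ n), ∀ y ∈ s, 0 < wronskian (Fin.take m hm f) y)
    {t : Fin n → ℝ} (ht : StrictMono t) (hts : ∀ j, t j ∈ s) :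
    0 < (Matrix.of fun i j => f i (t j)).det := by
  induction n with
  | zero => simp
  | succ n ih =>
    have hfn : ∀ i, ContDiffOn ℝ n (f i) s := by simpa using hf
    have hf0 : ∀ y ∈ s, 0 < f 0 y := fun y hy => by simpa [wronskian] using hW 1 (by omega) y hy
    set h : Fin (n + 1) → ℝ → ℝ := fun j y => f j y / f 0 y
    have hh : ∀ j, ContDiffOn ℝ n (h j) s := fun j =>
      (hfn j).div (hfn 0) fun y hy => (hf0 y hy).ne'
    have hg : ∀ i : Fin n, ContDiffOn ℝ (n - 1 : ℕ) (deriv (h i.succ)) s := fun i =>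
      (hh i.succ).deriv_of_isOpen hs (by exact_mod_cast (Nat.sub_add_cancel i.pos).le)
    have hWg : ∀ m (hm : m ≤ n), ∀ y ∈ s,
        0 < wronskian (Fin.take m hm fun i => deriv (h i.succ)) y := by
      intro m hm y hy
      have hWf := hW (m + 1) (by omega) y hy
      rw [wronskian_eq_pow_mul_wronskian_deriv_div (f := Fin.take (m + 1) (by omega) f)
        (fun j => ((hfn _).contDiffAt (hs.mem_nhds hy)).of_le (by exact_mod_cast hm))
        (hf0 y hy).ne'] at hWf
      exact pos_of_mul_pos_right hWf (pow_pos (hf0 y hy) _).le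
    have hdiff := det_sub_pos_of_det_deriv_pos hs hs'
      (fun i => (hh i.succ).of_le (by exact_mod_cast i.pos))
      (fun u hu hus => ih hg hWg hu hus) ht hts
    have hfh : (Matrix.of fun i j => f i (t j)).det =
        (∏ j, f 0 (t j)) * (Matrix.of fun i j => h i (t j)).det := by
      rw [← Matrix.det_mul_row]
      congr with i j
      simp [h, mul_div_cancel₀ _ (hf0 _ (hts j)).ne']
    rw [hfh, Matrix.det_eq_det_sub_of_row_zero_eq_one _
      fun j => div_self (hf0 _ (hts j)).ne']
    exact mul_pos (Finset.prod_pos fun j _ => hf0 _ (hts j)) hdiff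

theorem sdet_of_totally_positive_torsion_general (d : ℕ) (x : ℝ → Fin d → ℝ)
    (hC : ContDiffOn ℝ d x (Ioo 0 1))
    (htpt : ∀ t ∈ Ioo (0 : ℝ) 1, ∀ k : Fin d,
      0 < Matrix.det (Matrix.of fun i j : Fin ((k : ℕ) + 1) =>
        iteratedDeriv ((j : ℕ) + 1) x t (Fin.castLE k.isLt i))) :
    ∀ t : Fin d → ℝ, StrictMono t → (∀ i, t i ∈ Ioo (0 : ℝ) 1) →
      0 < Matrix.det (Matrix.of fun i j => deriv x (t j) i) := by
  intro t ht hts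
  have hx : ∀ y ∈ Ioo (0 : ℝ) 1, ContDiffAt ℝ d x y := fun y hy =>
    hC.contDiffAt (isOpen_Ioo.mem_nhds hy)
  let f : Fin d → ℝ → ℝ := fun i => deriv fun y => x y i
  have hf : ∀ i, ContDiffOn ℝ (d - 1 : ℕ) (f i) (Ioo 0 1) := fun i =>
    (contDiffOn_pi.mp hC i).deriv_of_isOpen isOpen_Ioo
      (by exact_mod_cast (Nat.sub_add_cancel i.pos).le)
  have hW : ∀ m (hm : m ≤ d), ∀ y ∈ Ioo (0 : ℝ) 1, 0 < wronskian (Fin.take m hm f) y := by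
    rintro (_ | k) hk y hy
    · simp [wronskian]
    · rw [wronskian_take_deriv_eq_det_iteratedDeriv (hx y hy)]
      exact htpt y hy ⟨k, hk⟩
  have hmat : (Matrix.of fun i j => deriv x (t j) i) = Matrix.of fun i j => f i (t j) := by
    ext i j
    simpa using iteratedDeriv_pi_apply (hx _ (hts j)) (k := 1) (by exact_mod_cast i.pos) i
  rw [hmat]
  exact det_pos_of_wronskian_pos isOpen_Ioo ordConnected_Ioo hf hW ht hts

/-- A path with totally positive torsion (all leading principal minors of the
matrix of derivatives `(x'(t), …, x^(d)(t))` are positive on `(0,1)`) satisfies the strictly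
positive determinant condition. -/
theorem sdet_of_totally_positive_torsion (d : ℕ) (x : ℝ → Fin d → ℝ)
    (hC : ContDiffOn ℝ d x (Ioo 0 1)) (hcont : ContinuousOn x (Icc 0 1))
    (htpt : ∀ t ∈ Ioo (0 : ℝ) 1, ∀ k : Fin d,
      0 < Matrix.det (Matrix.of fun i j : Fin ((k : ℕ) + 1) =>
        iteratedDeriv ((j : ℕ) + 1) x t (Fin.castLE k.isLt i))) :
    ∀ t : Fin d → ℝ, StrictMono t → (∀ i, t i ∈ Ioo (0 : ℝ) 1) →
      0 < Matrix.det (Matrix.of fun i j => deriv x (t j) i) :=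
  sdet_of_totally_positive_torsion_general d x hC htpt
end
end

section
/- Let x : [0,1] → ℝ^d be a Lipschitz path that satisfies the strictly positive determinant condition, i.e., det(x'(t_1), …, x'(t_d)) > 0 for all 0 < t_1 < … < t_d < 1 at points where x is differentiable. Then x is a d-order path; that is, det of the matrix with columns (1, x(t_0)), …, (1, x(t_d)) is strictly positive for all 0 ≤ t_0 < … < t_d ≤ 1. -/
open MeasureTheory Set Filter

noncomputable section

/-!
Subtracting consecutive columns turns the `(d+1) × (d+1)` determinant into
`det (x(t₁) - x(t₀), …, x(t_d) - x(t_{d-1}))`. A Lipschitz path is absolutely continuous, so each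
column is `∫_{t_{j-1}}^{t_j} x'`, and multilinearity of the determinant together with Fubini
writes the determinant as the integral of `det (x'(s₁), …, x'(s_d))` over the box
`∏ⱼ (t_{j-1}, t_j)`. Almost every point of that box is an increasing tuple of points of
differentiability in `(0,1)`, where the integrand is positive, and the box has positive measure.
-/

open Matrix

theorem LipschitzOnWith.ae_differentiableAt_of_isOpen {E F : Type*}
    [NormedAddCommGroup E] [NormedSpace ℝ E] [FiniteDimensional ℝ E]
    [MeasurableSpace E] [BorelSpace E] {μ : Measure E} [μ.IsAddHaarMeasure]
    [NormedAddCommGroup F] [NormedSpace ℝ F] [FiniteDimensional ℝ F]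
    {C : NNReal} {f : E → F} {s : Set E} (hf : LipschitzOnWith C f s) (hs : IsOpen s) :
    ∀ᵐ x ∂μ, x ∈ s → DifferentiableAt ℝ f x := by
  filter_upwards [hf.ae_differentiableWithinAt_of_mem] with x hx hxs
  exact (hx hxs).differentiableAt (hs.mem_nhds hxs)

section LipschitzPath

variable {ι : Type*} [Fintype ι] {C : NNReal} {f : ℝ → ι → ℝ} {a b : ℝ}

theorem LipschitzOnWith.deriv_apply_ae_eq (hf : LipschitzOnWith C f (Ioo a b)) (i : ι) :
    (fun s => deriv f s i) =ᵐ[volume.restrict (Ioo a b)] deriv (fun s => f s i) := by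
  rw [EventuallyEq, ae_restrict_iff' measurableSet_Ioo]
  filter_upwards [hf.ae_differentiableAt_of_isOpen isOpen_Ioo] with s hs hsab
  exact ((hasDerivAt_pi.1 (hs hsab).hasDerivAt) i).deriv.symm

theorem LipschitzOnWith.absolutelyContinuousOnInterval_apply
    (hf : LipschitzOnWith C f (uIcc a b)) (i : ι) :
    AbsolutelyContinuousOnInterval (fun s => f s i) a b := by
  have hfi := (LipschitzWith.eval i).comp_lipschitzOnWith hf
  rw [one_mul] at hfi
  exact hfi.absolutelyContinuousOnInterval

theorem LipschitzOnWith.integrableOn_deriv_apply (hf : LipschitzOnWith C f (uIcc a b)) (i : ι) :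
    IntegrableOn (fun s => deriv f s i) (Ioo a b) := by
  refine Integrable.congr ?_
    ((hf.mono (Ioo_subset_Icc_self.trans Icc_subset_uIcc)).deriv_apply_ae_eq i).symm
  exact ((hf.absolutelyContinuousOnInterval_apply i).intervalIntegrable_deriv.def'.mono_set
    (Ioo_subset_Ioc_self.trans Ioc_subset_uIoc))

theorem LipschitzOnWith.integral_Ioo_deriv_apply (hf : LipschitzOnWith C f (uIcc a b))
    (hab : a ≤ b) (i : ι) :
    ∫ s in Ioo a b, deriv f s i = f b i - f a i := by
  rw [integral_congr_ae
      ((hf.mono (Ioo_subset_Icc_self.trans Icc_subset_uIcc)).deriv_apply_ae_eq i),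
    ← integral_Ioc_eq_integral_Ioo, ← intervalIntegral.integral_of_le hab,
    (hf.absolutelyContinuousOnInterval_apply i).integral_deriv_eq_sub]

end LipschitzPath

section DetIntegral

variable {𝕜 ι α : Type*} [RCLike 𝕜] [Fintype ι] [DecidableEq ι] [MeasurableSpace α]
  {μ : ι → Measure α} [∀ j, SigmaFinite (μ j)] {G : ι → ι → α → 𝕜}

theorem integrable_det_of_integrable_entries (hG : ∀ i j, Integrable (G i j) (μ j)) :
    Integrable (fun s : ι → α => det (of fun i j => G i j (s j))) (Measure.pi μ) := by
  simp only [det_apply', of_apply]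
  exact integrable_finsetSum _ fun σ _ =>
    (Integrable.fintype_prod fun i => hG (σ i) i).const_mul _

theorem det_integral_eq_integral_det (hG : ∀ i j, Integrable (G i j) (μ j)) :
    det (of fun i j => ∫ u, G i j u ∂μ j) =
      ∫ s, det (of fun i j => G i j (s j)) ∂Measure.pi μ := by
  simp only [det_apply', of_apply]
  rw [integral_finsetSum _ fun σ _ =>
    (Integrable.fintype_prod fun i => hG (σ i) i).const_mul _]
  simp only [integral_const_mul, integral_fintype_prod_eq_prod]

end DetIntegral

theorem det_cons_one_eq_det_sub {R : Type*} [CommRing R] {d : ℕ}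
    (v : Fin (d + 1) → Fin d → R) :
    det (of fun i j => Fin.cons (α := fun _ => R) 1 (v j) i) =
      det (of fun i j : Fin d => v j.succ i - v j.castSucc i) := by
  set M : Matrix (Fin (d + 1)) (Fin (d + 1)) R :=
    of fun i j => Fin.cons (α := fun _ => R) 1 (v j) i
  have hcol : det M = det (of fun i j =>
      Fin.cases (M i 0) (fun j' => M i j'.succ - M i j'.castSucc) j) :=
    det_eq_of_forall_col_eq_smul_add_pred (fun _ => 1) (by simp) (by simp)
  rw [hcol, det_succ_row_zero, Fin.sum_univ_succ]
  simp [M, submatrix]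

theorem integral_pos_of_ae_pos {α : Type*} [MeasurableSpace α] {μ : Measure α} [NeZero μ]
    {f : α → ℝ} (hf : ∀ᵐ x ∂μ, 0 < f x) (hfi : Integrable f μ) : 0 < ∫ x, f x ∂μ := by
  rw [integral_pos_iff_support_of_nonneg_ae (hf.mono fun _ h => h.le) hfi, pos_iff_ne_zero]
  intro hf0
  obtain ⟨x, hx, hx0⟩ := (hf.and ((Measure.measure_support_eq_zero_iff μ).1 hf0)).exists
  exact hx.ne' hx0

instance MeasureTheory.Measure.pi.neZero {ι : Type*} [Fintype ι] {α : ι → Type*}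
    [∀ i, MeasurableSpace (α i)] {μ : ∀ i, Measure (α i)} [∀ i, SigmaFinite (μ i)]
    [∀ i, NeZero (μ i)] : NeZero (Measure.pi μ) := by
  refine ⟨fun h => ?_⟩
  have hprod := Measure.pi_univ μ
  rw [h, Measure.coe_zero, Pi.zero_apply, eq_comm, Finset.prod_eq_zero_iff] at hprod
  obtain ⟨i, -, hi⟩ := hprod
  exact NeZero.ne (μ i) (Measure.measure_univ_eq_zero.1 hi)

theorem strictMono_of_mem_Ioo_castSucc_succ {α : Type*} [Preorder α] {d : ℕ}
    {t : Fin (d + 1) → α} (ht : Monotone t) {s : Fin d → α}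
    (hs : ∀ j, s j ∈ Ioo (t j.castSucc) (t j.succ)) : StrictMono s := fun _ _ hjk =>
  ((hs _).2.trans_le (ht (Fin.succ_le_castSucc_iff.2 hjk))).trans (hs _).1

/-- A Lipschitz path satisfying the strictly positive determinant condition
(at points of differentiability) is a `d`-order path. -/
theorem dOrder_of_sdet (d : ℕ) (x : ℝ → Fin d → ℝ) (K : NNReal)
    (hlip : LipschitzOnWith K x (Icc 0 1))
    (hsdet : ∀ t : Fin d → ℝ, StrictMono t → (∀ i, t i ∈ Ioo (0 : ℝ) 1) →
      (∀ i, DifferentiableAt ℝ x (t i)) →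
      0 < Matrix.det (Matrix.of fun i j => deriv x (t j) i)) :
    IsDOrderPath d x := by
  intro t ht ht01
  let I : Fin d → Set ℝ := fun j => Ioo (t j.castSucc) (t j.succ)
  let μ : Fin d → Measure ℝ := fun j => volume.restrict (I j)
  have hI01 : ∀ j, I j ⊆ Ioo 0 1 := fun j => Ioo_subset_Ioo (ht01 _).1 (ht01 _).2
  have hlipI : ∀ j : Fin d, LipschitzOnWith K x (uIcc (t j.castSucc) (t j.succ)) := fun j =>
    hlip.mono (uIcc_subset_Icc (ht01 _) (ht01 _))
  have hint : ∀ i j, Integrable (fun s => deriv x s i) (μ j) := fun i j =>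
    (hlipI j).integrableOn_deriv_apply i
  have hcols : (of fun i j : Fin d => x (t j.succ) i - x (t j.castSucc) i) =
      of fun i j => ∫ s, deriv x s i ∂μ j := by
    ext i j
    exact ((hlipI j).integral_Ioo_deriv_apply (ht.monotone (Fin.castSucc_le_succ j)) i).symm
  have hgood : ∀ᵐ s ∂Measure.pi μ, ∀ j, s j ∈ I j ∧ DifferentiableAt ℝ x (s j) := by
    refine ae_all_iff.2 fun j => (Measure.tendsto_eval_ae_ae (i := j)).eventually
      (p := fun u => u ∈ I j ∧ DifferentiableAt ℝ x u) ?_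
    rw [ae_restrict_iff' measurableSet_Ioo]
    filter_upwards [(hlip.mono Ioo_subset_Icc_self).ae_differentiableAt_of_isOpen isOpen_Ioo]
      with s hs hsI using ⟨hsI, hs (hI01 j hsI)⟩
  have : ∀ j, NeZero (μ j) := fun j =>
    ⟨by simp [μ, I, Measure.restrict_eq_zero, ht Fin.castSucc_lt_succ]⟩
  rw [det_cons_one_eq_det_sub, hcols, det_integral_eq_integral_det hint]
  refine integral_pos_of_ae_pos ?_ (integrable_det_of_integrable_entries hint)
  filter_upwards [hgood] with s hs
  exact hsdet s (strictMono_of_mem_Ioo_castSucc_succ ht.monotone fun j => (hs j).1)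
    (fun j => hI01 j (hs j).1) fun j => (hs j).2
end
end

section
/- The planar path x : [0,1] → ℝ² defined by x(t) = (t, (t − 0.5)^4) satisfies the strictly positive determinant condition, i.e., det(x'(t_1), x'(t_2)) > 0 whenever 0 < t_1 < t_2 < 1, but it does not have totally positive torsion: the determinant of the matrix (x'(t), x''(t)) vanishes at t = 0.5. -/
/-!
For a graph path `x t = (t, f t)` one has `det (x' t₁, x' t₂) = f' t₂ - f' t₁` and
`det (x' t, x'' t) = f'' t`. For `f t = (t - 1/2)^4` the derivative `4 (t - 1/2)^3` is strictly
increasing, which gives the determinant condition, while `f'' (1/2) = 12 · 0^2 = 0`.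
-/

open MeasureTheory Set Filter

noncomputable section

def graphPath (f : ℝ → ℝ) : ℝ → Fin 2 → ℝ := fun t => ![t, f t]

lemma hasDerivAt_vecCons_two {f g : ℝ → ℝ} {f' g' t : ℝ} (hf : HasDerivAt f f' t)
    (hg : HasDerivAt g g' t) : HasDerivAt (fun s => ![f s, g s]) ![f', g'] t :=
  hasDerivAt_pi.2 fun i => by fin_cases i <;> simpa

lemma deriv_graphPath {f : ℝ → ℝ} (hf : Differentiable ℝ f) :
    deriv (graphPath f) = fun t => ![1, deriv f t] :=
  funext fun t => (hasDerivAt_vecCons_two (hasDerivAt_id t) (hf t).hasDerivAt).deriv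

lemma iteratedDeriv_two_graphPath {f : ℝ → ℝ} {t : ℝ} (hf : Differentiable ℝ f)
    (hf' : DifferentiableAt ℝ (deriv f) t) :
    iteratedDeriv 2 (graphPath f) t = ![0, deriv (deriv f) t] := by
  rw [iteratedDeriv_succ, iteratedDeriv_one, deriv_graphPath hf]
  exact (hasDerivAt_vecCons_two (hasDerivAt_const t 1) hf'.hasDerivAt).deriv

lemma det_deriv_graphPath {f : ℝ → ℝ} (hf : Differentiable ℝ f) (t₁ t₂ : ℝ) :
    Matrix.det (Matrix.of fun i j => deriv (graphPath f) (![t₁, t₂] j) i) =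
      deriv f t₂ - deriv f t₁ := by
  rw [Matrix.det_fin_two, deriv_graphPath hf]
  simp

lemma det_iteratedDeriv_graphPath {f : ℝ → ℝ} {t : ℝ} (hf : Differentiable ℝ f)
    (hf' : DifferentiableAt ℝ (deriv f) t) :
    Matrix.det (Matrix.of fun i j : Fin 2 => iteratedDeriv ((j : ℕ) + 1) (graphPath f) t i) =
      deriv (deriv f) t := by
  rw [Matrix.det_fin_two]
  simp [iteratedDeriv_two_graphPath hf hf', deriv_graphPath hf]

lemma deriv_sub_const_pow (a : ℝ) (n : ℕ) :
    deriv (fun t : ℝ => (t - a) ^ n) = fun t => n * (t - a) ^ (n - 1) := by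
  funext t
  simp

/-- The path `x(t) = (t, (t - 1/2)^4)` satisfies the strictly positive
determinant condition, but the determinant of `(x'(t), x''(t))` vanishes at `t = 1/2`,
so it does not have totally positive torsion. -/
theorem sdet_example_not_tpt (x : ℝ → Fin 2 → ℝ)
    (hx : x = fun t => ![t, (t - 1/2) ^ 4]) :
    (∀ t₁ t₂ : ℝ, 0 < t₁ → t₁ < t₂ → t₂ < 1 →
      0 < Matrix.det (Matrix.of fun i j => deriv x (![t₁, t₂] j) i)) ∧
    Matrix.det (Matrix.of fun i j : Fin 2 =>
      iteratedDeriv ((j : ℕ) + 1) x (1/2) i) = 0 := by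
  obtain rfl : x = graphPath fun t => (t - 1/2) ^ 4 := hx
  have hf : Differentiable ℝ fun t : ℝ => (t - 1/2) ^ 4 := by fun_prop
  have hf' : Differentiable ℝ (deriv fun t : ℝ => (t - 1/2) ^ 4) := by
    rw [deriv_sub_const_pow]; fun_prop
  refine ⟨fun t₁ t₂ _ h₁₂ _ => ?_, ?_⟩
  · rw [det_deriv_graphPath hf, deriv_sub_const_pow, sub_pos]
    have hcube := Odd.strictMono_pow (R := ℝ) (by decide : Odd 3) (sub_lt_sub_right h₁₂ (1/2))
    norm_num
    linarith
  · rw [det_iteratedDeriv_graphPath hf (hf' _), deriv_sub_const_pow]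
    simp
end
end

section
/- Fix d distinct positive real numbers a_1, …, a_d. The logarithmic curve x : [0,1] → ℝ^d defined by x(t) = (log(1 + a_1 t), …, log(1 + a_d t)) is a d-order curve; that is, no affine hyperplane in ℝ^d intersects its image in more than d points. Equivalently, for all 0 ≤ t_0 < … < t_d ≤ 1, the (d+1)×(d+1) matrix with columns (x(t_0),1), …, (x(t_d),1) is nonsingular. -/
/-!
If the determinant vanished, some nontrivial combination `f(u) = ∑ bᵢ log(1 + aᵢ u) + c`
would vanish at the `d + 1` points `t₀ < ⋯ < t_d`. By Rolle, `f'(u) = ∑ bᵢ / (u + aᵢ⁻¹)` then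
vanishes at `d` distinct points `u > 0`. Clearing denominators, a polynomial of degree `< d` has `d`
zeros, so it is zero; evaluating it at the distinct poles `-aᵢ⁻¹` gives `bᵢ = 0`, and then
`c = f(t₀) = 0`.
-/

open MeasureTheory Set Filter

noncomputable section

open Lagrange Polynomial in
theorem eq_zero_of_sum_mul_inv_sub_eq_zero {F ι : Type*} [Field F] [Fintype ι] [DecidableEq ι]
    {p x c : ι → F} (hp : Function.Injective p) (hx : Function.Injective x)
    (hxp : ∀ i j, x j ≠ p i) (h : ∀ j, ∑ i, c i * (x j - p i)⁻¹ = 0) : c = 0 := by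
  have hpinj : InjOn p (Finset.univ : Finset ι) := hp.injOn
  have hw : ∀ i, nodalWeight Finset.univ p i ≠ 0 := fun i =>
    nodalWeight_ne_zero hpinj (Finset.mem_univ i)
  -- By the barycentric formula, the interpolant of `c i / nodalWeight univ p i` at the nodes `p` is
  -- `nodal p · ∑ c i / (X - p i)`, a polynomial of degree `< card ι` vanishing at every `x j`.
  set r : ι → F := fun i => c i / nodalWeight Finset.univ p i
  have hP : interpolate Finset.univ p r = 0 := by
    refine eq_zero_of_degree_lt_of_eval_index_eq_zero Finset.univ hx.injOn
      (by simpa using degree_interpolate_lt r hpinj) fun j _ => ?_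
    have hsum : ∑ i, nodalWeight Finset.univ p i * (x j - p i)⁻¹ * r i =
        ∑ i, c i * (x j - p i)⁻¹ :=
      Finset.sum_congr rfl fun i _ => by simp only [r]; field_simp [hw i]
    rw [eval_interpolate_not_at_node r fun i _ => hxp i j, hsum, h j, mul_zero]
  funext i
  have hri := eval_interpolate_at_node r hpinj (Finset.mem_univ i)
  rw [hP, eval_zero] at hri
  simpa [r, hw i] using hri.symm

theorem exists_strictMono_hasDerivAt_eq_zero {n : ℕ} {f f' : ℝ → ℝ}
    {t : Fin (n + 1) → ℝ} (ht : StrictMono t)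
    (hf : ∀ u ∈ Icc (t 0) (t (Fin.last n)), HasDerivAt f (f' u) u)
    (h0 : ∀ j, f (t j) = 0) :
    ∃ s : Fin n → ℝ, StrictMono s ∧ (∀ j, s j ∈ Ioo (t j.castSucc) (t j.succ)) ∧
      ∀ j, f' (s j) = 0 := by
  have hmem : ∀ j : Fin n, Icc (t j.castSucc) (t j.succ) ⊆ Icc (t 0) (t (Fin.last n)) :=
    fun j => Icc_subset_Icc (ht.monotone (Fin.zero_le _)) (ht.monotone (Fin.le_last _))
  have hrolle : ∀ j : Fin n, ∃ s ∈ Ioo (t j.castSucc) (t j.succ), f' s = 0 := fun j =>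
    exists_hasDerivAt_eq_zero (ht Fin.castSucc_lt_succ)
      (fun u hu => (hf u (hmem j hu)).continuousAt.continuousWithinAt)
      (by rw [h0, h0]) fun u hu => hf u (hmem j (Ioo_subset_Icc_self hu))
  choose s hs hs0 using hrolle
  refine ⟨s, fun j k hjk => ?_, hs, hs0⟩
  have hle : j.succ ≤ k.castSucc := Fin.succ_le_castSucc_iff.2 hjk
  exact (hs j).2.trans_le ((ht.monotone hle).trans (hs k).1.le)

theorem hasDerivAt_log_one_add_mul {a u : ℝ} (ha : a ≠ 0) (hu : 1 + a * u ≠ 0) :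
    HasDerivAt (fun u => Real.log (1 + a * u)) (u - -a⁻¹)⁻¹ u := by
  convert (((hasDerivAt_id' u).const_mul a).const_add 1).log hu using 1
  field_simp
  ring

theorem eq_zero_of_sum_mul_log_one_add_mul_add_eq_zero {d : ℕ} {a : Fin d → ℝ}
    (hpos : ∀ i, 0 < a i) (hdist : Function.Injective a) {b : Fin d → ℝ} {c : ℝ}
    {t : Fin (d + 1) → ℝ} (ht : StrictMono t) (ht0 : 0 ≤ t 0)
    (h : ∀ j, ∑ i, b i * Real.log (1 + a i * t j) + c = 0) : b = 0 ∧ c = 0 := by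
  have hderiv : ∀ u, 0 ≤ u → HasDerivAt (fun u => ∑ i, b i * Real.log (1 + a i * u) + c)
      (∑ i, b i * (u - -(a i)⁻¹)⁻¹) u := fun u hu =>
    (HasDerivAt.fun_sum fun i _ => (hasDerivAt_log_one_add_mul (hpos i).ne'
      (by nlinarith [hpos i])).const_mul (b i)).add_const c
  obtain ⟨s, hs, hst, hs0⟩ := exists_strictMono_hasDerivAt_eq_zero ht
    (fun u hu => hderiv u (ht0.trans hu.1)) h
  have hs_pos : ∀ j, 0 < s j := fun j =>
    ht0.trans_lt ((ht.monotone (Fin.zero_le _)).trans_lt (hst j).1)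
  have hb : b = 0 := by
    refine eq_zero_of_sum_mul_inv_sub_eq_zero (p := fun i => -(a i)⁻¹)
      (fun i k hik => hdist (by simpa using hik)) hs.injective (fun i j => ?_) hs0
    have hai := inv_pos.2 (hpos i)
    exact ne_of_gt (by linarith [hs_pos j])
  refine ⟨hb, ?_⟩
  simpa [hb] using h 0

/-- The logarithmic curve `x(t) = (log(1 + a₁ t), …, log(1 + a_d t))` with
distinct positive parameters is a `d`-order curve: for all `0 ≤ t₀ < ⋯ < t_d ≤ 1` the
`(d+1) × (d+1)` matrix with columns `(x(t_j), 1)` is nonsingular. -/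
theorem log_curve_is_dOrder (d : ℕ) (a : Fin d → ℝ) (hpos : ∀ i, 0 < a i)
    (hdist : Function.Injective a) (x : ℝ → Fin d → ℝ)
    (hx : x = fun t i => Real.log (1 + a i * t)) :
    ∀ t : Fin (d + 1) → ℝ, StrictMono t → (∀ i, t i ∈ Icc (0 : ℝ) 1) →
      Matrix.det (Matrix.of fun i j => Fin.snoc (x (t j)) (1 : ℝ) i) ≠ 0 := by
  intro t ht htI hdet
  obtain ⟨c, hc0, hc⟩ := Matrix.exists_vecMul_eq_zero_iff.2 hdet
  have hrow : ∀ j, ∑ i : Fin d, c i.castSucc * Real.log (1 + a i * t j) + c (Fin.last d) = 0 :=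
    fun j => by simpa [Matrix.vecMul, dotProduct, Fin.sum_univ_castSucc, hx] using congrFun hc j
  obtain ⟨hb, hlast⟩ :=
    eq_zero_of_sum_mul_log_one_add_mul_add_eq_zero hpos hdist ht (htI 0).1 hrow
  exact hc0 (funext fun i => Fin.lastCases hlast (fun i => congrFun hb i) i)
end
end

section
/- Consider the closed space curve x : [0,1] → ℝ³ given by x(t) = (cos 2πt, sin 2πt, cos 6πt). Its level-3 alternating signature vanishes, α^(3)(x) = (1/3!) ∫_{0 ≤ t_1 < t_2 < t_3 ≤ 1} det(x'(t_1), x'(t_2), x'(t_3)) dt = 0, while the volume of the convex hull of its image is strictly positive: vol(conv(x)) ≠ 0. In particular the image of x consists of extreme points of its convex hull, yet the signature volume formula fails for x. -/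
open MeasureTheory Set Filter

noncomputable section

/-! The curve is symmetric under time reversal: `x (1 - u) = diag(1, -1, 1) x(u)`. The map
`(t₁, t₂, t₃) ↦ (1 - t₃, 1 - t₂, 1 - t₁)` preserves Lebesgue measure and the ordered simplex, and
it multiplies the integrand `det(x'(t₁), x'(t₂), x'(t₃))` by
`det(-diag(1, -1, 1)) · sign(t₁ ↔ t₃) = -1`, so the integral vanishes. On the other hand the four
points `x 0, x (1/4), x (1/2), x (1/12)` are affinely independent, so the convex hull of the curve
has nonempty interior and therefore positive, finite volume. -/

open Matrix

section SimplexReflection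

variable {d : ℕ}

def simplexReflection (d : ℕ) : (Fin d → ℝ) ≃ᵐ (Fin d → ℝ) where
  toFun t i := 1 - t i.rev
  invFun t i := 1 - t i.rev
  left_inv t := by simp
  right_inv t := by simp
  measurable_toFun := measurable_pi_lambda _ fun i => (measurable_pi_apply _).const_sub 1
  measurable_invFun := measurable_pi_lambda _ fun i => (measurable_pi_apply _).const_sub 1

@[simp]
lemma simplexReflection_apply (t : Fin d → ℝ) (i : Fin d) :
    simplexReflection d t i = 1 - t i.rev :=
  rfl

@[simp]
lemma simplexReflection_simplexReflection (t : Fin d → ℝ) :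
    simplexReflection d (simplexReflection d t) = t :=
  (simplexReflection d).left_inv t

lemma measurePreserving_simplexReflection :
    MeasurePreserving (simplexReflection d) volume volume := by
  have hrev := volume_measurePreserving_piCongrLeft (fun _ : Fin d => ℝ) Fin.revPerm
  have hsub := volume_preserving_pi fun _ : Fin d =>
    Measure.measurePreserving_sub_left (volume : Measure ℝ) 1
  have hcomp : ⇑(simplexReflection d) =
      (fun t i => 1 - t i) ∘ MeasurableEquiv.piCongrLeft (fun _ : Fin d => ℝ) Fin.revPerm := by
    funext t i
    simpa using (MeasurableEquiv.piCongrLeft_apply_apply (β := fun _ => ℝ) Fin.revPerm t i.rev).symm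
  rw [hcomp]
  exact hsub.comp hrev

lemma mapsTo_simplexReflection_orderedSimplex :
    MapsTo (simplexReflection d) (orderedSimplex d) (orderedSimplex d) := by
  rintro t ⟨hmono, hmem⟩
  refine ⟨fun i j hij => ?_, fun i => ?_⟩
  · simpa using hmono (Fin.rev_lt_rev.mpr hij)
  · simpa [and_comm] using hmem i.rev

lemma preimage_simplexReflection_orderedSimplex :
    simplexReflection d ⁻¹' orderedSimplex d = orderedSimplex d := by
  refine Subset.antisymm (fun t ht => ?_) mapsTo_simplexReflection_orderedSimplex
  simpa using mapsTo_simplexReflection_orderedSimplex ht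

lemma setIntegral_orderedSimplex_eq_zero_of_antisymm {f : (Fin d → ℝ) → ℝ}
    (hf : ∀ t, f (simplexReflection d t) = -f t) :
    ∫ t in orderedSimplex d, f t = 0 := by
  have h := measurePreserving_simplexReflection.setIntegral_preimage_emb
    (simplexReflection d).measurableEmbedding f (orderedSimplex d)
  rw [preimage_simplexReflection_orderedSimplex] at h
  simp only [hf, integral_neg] at h
  linarith

end SimplexReflection

section AffineSymmetry

variable {d : ℕ} {x : ℝ → Fin d → ℝ} {A : Matrix (Fin d) (Fin d) ℝ} {c : Fin d → ℝ}

lemma deriv_one_sub_of_affine_symm (hx : Differentiable ℝ x)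
    (hsym : ∀ u, x (1 - u) = A *ᵥ x u + c) (u : ℝ) :
    deriv x (1 - u) = -(A *ᵥ deriv x u) := by
  have hderiv : HasDerivAt (fun u => A *ᵥ x u + c) (A *ᵥ deriv x u) u :=
    ((toLin' A).toContinuousLinearMap.hasFDerivAt.comp_hasDerivAt u (hx u).hasDerivAt).add_const c
  have h := hderiv.deriv
  rw [← funext hsym, deriv_comp_const_sub] at h
  rw [← h, neg_neg]

lemma det_deriv_simplexReflection (hx : Differentiable ℝ x)
    (hsym : ∀ u, x (1 - u) = A *ᵥ x u + c) (t : Fin d → ℝ) :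
    (Matrix.of fun i j => deriv x (simplexReflection d t j) i).det =
      (-A).det * Equiv.Perm.sign (Fin.revPerm : Equiv.Perm (Fin d)) *
        (Matrix.of fun i j => deriv x (t j) i).det := by
  have hmat : (Matrix.of fun i j => deriv x (simplexReflection d t j) i) =
      -A * (Matrix.of fun i j => deriv x (t j) i).submatrix id Fin.revPerm := by
    ext i j
    simp [deriv_one_sub_of_affine_symm hx hsym, mul_apply, mulVec, dotProduct]
  rw [hmat, det_mul, det_permute', mul_assoc]

lemma altSig_eq_zero_of_affine_symm (hx : Differentiable ℝ x)
    (hsym : ∀ u, x (1 - u) = A *ᵥ x u + c)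
    (hA : (-A).det * Equiv.Perm.sign (Fin.revPerm : Equiv.Perm (Fin d)) = -1) :
    altSig d x = 0 := by
  rw [altSig, setIntegral_orderedSimplex_eq_zero_of_antisymm fun t => ?_, mul_zero]
  rw [det_deriv_simplexReflection hx hsym, hA, neg_one_mul]

end AffineSymmetry

lemma measure_convexHull_toReal_ne_zero {E : Type*} [NormedAddCommGroup E] [NormedSpace ℝ E]
    [FiniteDimensional ℝ E] [MeasurableSpace E] (μ : Measure E) [μ.IsAddHaarMeasure] {s : Set E}
    (hs : Bornology.IsBounded s) (hspan : affineSpan ℝ s = ⊤) :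
    (μ (convexHull ℝ s)).toReal ≠ 0 := by
  have hint : (interior (convexHull ℝ s)).Nonempty := by
    rwa [(convex_convexHull ℝ s).interior_nonempty_iff_affineSpan_eq_top, affineSpan_convexHull]
  have hfin : μ (convexHull ℝ s) ≠ ⊤ := (isBounded_convexHull.mpr hs).measure_lt_top.ne
  exact ENNReal.toReal_ne_zero.mpr ⟨(μ.measure_pos_of_nonempty_interior hint).ne', hfin⟩

lemma affineSpan_eq_top_of_det_ne_zero {d : ℕ} {s : Set (Fin d → ℝ)} {p₀ : Fin d → ℝ}
    {p : Fin d → Fin d → ℝ} (hp₀ : p₀ ∈ s) (hp : ∀ i, p i ∈ s)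
    (hdet : (Matrix.of fun i => p i - p₀).det ≠ 0) :
    affineSpan ℝ s = ⊤ := by
  rw [AffineSubspace.affineSpan_eq_top_iff_vectorSpan_eq_top_of_nonempty ℝ _ _ ⟨p₀, hp₀⟩,
    eq_top_iff,
    ← (linearIndependent_rows_of_det_ne_zero hdet).span_eq_top_of_card_eq_finrank' (by simp),
    Submodule.span_le]
  rintro _ ⟨i, rfl⟩
  exact vsub_mem_vectorSpan ℝ (hp i) hp₀

section WavyCircle

open Real

def wavyCircle (t : ℝ) : Fin 3 → ℝ :=
  ![cos (2 * π * t), sin (2 * π * t), cos (6 * π * t)]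

lemma differentiable_wavyCircle : Differentiable ℝ wavyCircle := by
  refine differentiable_pi.2 fun i => ?_
  fin_cases i <;>
    simp only [wavyCircle, Fin.zero_eta, Fin.mk_one, Fin.reduceFinMk, Fin.isValue, cons_val_zero,
      cons_val_one, cons_val] <;> fun_prop

lemma wavyCircle_one_sub (u : ℝ) :
    wavyCircle (1 - u) = diagonal ![1, -1, 1] *ᵥ wavyCircle u := by
  have h2 : 2 * π * (1 - u) = 2 * π - 2 * π * u := by ring
  have h6 : 6 * π * (1 - u) = (3 : ℕ) * (2 * π) - 6 * π * u := by push_cast; ring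
  rw [wavyCircle, wavyCircle, h2, h6, cos_two_pi_sub, sin_two_pi_sub, cos_nat_mul_two_pi_sub]
  ext i
  fin_cases i <;> simp [mulVec_diagonal]

lemma sign_revPerm_fin_three : Equiv.Perm.sign (Fin.revPerm : Equiv.Perm (Fin 3)) = -1 := by
  decide

lemma altSig_wavyCircle : altSig 3 wavyCircle = 0 := by
  refine altSig_eq_zero_of_affine_symm differentiable_wavyCircle (c := 0)
    (fun u => by rw [add_zero, wavyCircle_one_sub]) ?_
  simp [sign_revPerm_fin_three, Fin.prod_univ_three]

lemma wavyCircle_zero : wavyCircle 0 = ![1, 0, 1] := by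
  simp [wavyCircle]

lemma wavyCircle_one_fourth : wavyCircle (1 / 4) = ![0, 1, 0] := by
  have h2 : 2 * π * (1 / 4) = π / 2 := by ring
  have h6 : 6 * π * (1 / 4) = (1 : ℕ) * (2 * π) - π / 2 := by push_cast; ring
  rw [wavyCircle, h2, h6, cos_nat_mul_two_pi_sub]
  simp

lemma wavyCircle_one_half : wavyCircle (1 / 2) = ![-1, 0, -1] := by
  have h2 : 2 * π * (1 / 2) = π := by ring
  have h6 : 6 * π * (1 / 2) = (2 : ℕ) * (2 * π) - π := by push_cast; ring
  rw [wavyCircle, h2, h6, cos_nat_mul_two_pi_sub]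
  simp

lemma wavyCircle_one_twelfth : wavyCircle (1 / 12) = ![√3 / 2, 1 / 2, 0] := by
  have h2 : 2 * π * (1 / 12) = π / 6 := by ring
  have h6 : 6 * π * (1 / 12) = π / 2 := by ring
  rw [wavyCircle, h2, h6]
  simp

lemma affineSpan_wavyCircle_image : affineSpan ℝ (wavyCircle '' Icc 0 1) = ⊤ := by
  refine affineSpan_eq_top_of_det_ne_zero (p₀ := wavyCircle 0)
    (p := ![wavyCircle (1 / 4), wavyCircle (1 / 2), wavyCircle (1 / 12)])
    (mem_image_of_mem _ ⟨le_rfl, zero_le_one⟩) (fun i => ?_) ?_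
  · fin_cases i <;> exact mem_image_of_mem _ ⟨by norm_num, by norm_num⟩
  · rw [wavyCircle_zero, wavyCircle_one_fourth, wavyCircle_one_half, wavyCircle_one_twelfth]
    simp only [det_fin_three, of_apply, sub_cons, sub_zero, empty_sub_empty, Fin.isValue,
      cons_val_zero, cons_val_one, cons_val, head_cons, tail_cons]
    ring_nf
    norm_num

lemma volume_convexHull_wavyCircle_image :
    (volume (convexHull ℝ (wavyCircle '' Icc 0 1))).toReal ≠ 0 :=
  measure_convexHull_toReal_ne_zero volume
    (isCompact_Icc.image differentiable_wavyCircle.continuous).isBounded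
    affineSpan_wavyCircle_image

end WavyCircle

/-- For the closed curve `x(t) = (cos 2πt, sin 2πt, cos 6πt)` the level-3
alternating signature vanishes while the volume of the convex hull of its image does not;
in particular the signature volume formula fails for `x`. -/
theorem closed_curve_altSig_zero_volume_pos (x : ℝ → Fin 3 → ℝ)
    (hx : x = fun t => ![Real.cos (2 * Real.pi * t), Real.sin (2 * Real.pi * t),
      Real.cos (6 * Real.pi * t)]) :
    altSig 3 x = 0 ∧ (volume (convexHull ℝ (x '' Icc 0 1))).toReal ≠ 0 := by
  subst hx
  exact ⟨altSig_wavyCircle, volume_convexHull_wavyCircle_image⟩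
end
end

section
/- Let x : [0,1] → ℝ^d be a Lipschitz path, let k ≤ d be odd, and let P : [k] → [d] be an order-preserving injection. For i ∈ [k], define P_i : [k−1] → [d] by P_i(r) = P(r) if r < i and P_i(r) = P(r+1) if r ≥ i. Then the alternating signature entries satisfy α_P(x) = (1/k) Σ_{i=1}^{k} (−1)^{i+1} σ_{P(i)}(x) · α_{P_i}(x), where σ_j(x) = x_j(1) − x_j(0) is the level-1 signature. -/
open MeasureTheory Set Filter

noncomputable section

/-- The alternating signature entry `α_P(x)` for an order-preserving injection
`P : [k] → [d]`. -/
def altSigEntry (d k : ℕ) (x : ℝ → Fin d → ℝ) (P : Fin k → Fin d) : ℝ :=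
  (1 / (Nat.factorial k : ℝ)) *
    ∫ t in orderedSimplex k,
      Matrix.det (Matrix.of fun i j : Fin k => deriv x (t j) (P i))

/-- The level-2 signature entry `σ_{i,j}(x)`. -/
def sigPair (d : ℕ) (x : ℝ → Fin d → ℝ) (i j : Fin d) : ℝ :=
  ∫ t in orderedSimplex 2, deriv x (t 0) i * deriv x (t 1) j

/-- The signed area `α_{i,j}(x) = (σ_{i,j}(x) - σ_{j,i}(x))/2` of the projection of `x`
to the `(eᵢ, eⱼ)`-plane. -/
def signedArea (d : ℕ) (x : ℝ → Fin d → ℝ) (i j : Fin d) : ℝ :=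
  (1 / 2) * (sigPair d x i j - sigPair d x j i)

/-!
Expanding the determinant along its `p`-th column, the column of the time `t p`, writes
`∫_{Δ^k} det` as `Σ_i (-1)^(i+p) ∫ x'_{P i}(t p) · det(minor_i)(t without t p)`. Integrating out
`t p` over its gap `(t (p-1), t (p+1))` and summing over `p`, the gaps tile `[0, 1]`, so the
`i`-th terms add up to `σ_{P i}(x) · ∫_{Δ^(k-1)} det(minor_i)`. Hence weighting the `p`-th expansion
by `(-1)^p` and summing gives `(Σ_p (-1)^p) · ∫_{Δ^k} det = Σ_i (-1)^i σ_{P i}(x) ∫ det(minor_i)`,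
and `Σ_p (-1)^p = 1` for odd `k`. Since `x` is only Lipschitz on `[0, 1]`, it is first replaced by
a Lipschitz extension to `ℝ`, which has the same derivative on `(0, 1)`.
-/

open scoped Nat

theorem Fin.sum_neg_one_pow_of_odd {R : Type*} [Ring R] {n : ℕ} (hn : Odd n) :
    ∑ p : Fin n, (-1 : R) ^ (p : ℕ) = 1 := by
  rw [Fin.sum_univ_eq_sum_range (fun q => (-1 : R) ^ q), neg_one_geom_sum,
    if_neg (Nat.not_even_iff_odd.2 hn)]

theorem Matrix.neg_one_pow_mul_det_eq_sum {R : Type*} [CommRing R] {n : ℕ}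
    (M : Matrix (Fin (n + 1)) (Fin (n + 1)) R) (p : Fin (n + 1)) :
    (-1) ^ (p : ℕ) * M.det =
      ∑ i : Fin (n + 1), (-1) ^ (i : ℕ) * (M i p * (M.submatrix i.succAbove p.succAbove).det) := by
  have hsign : (-1 : R) ^ (p : ℕ) * (-1) ^ (p : ℕ) = 1 := by rw [← mul_pow]; norm_num
  rw [M.det_succ_column p, Finset.mul_sum]
  refine Finset.sum_congr rfl fun i _ => ?_
  rw [pow_add]
  linear_combination (M i p * (-1) ^ (i : ℕ) * (M.submatrix i.succAbove p.succAbove).det) * hsign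

theorem abs_det_le_of_forall_abs_le {n : ℕ} {A : Matrix (Fin n) (Fin n) ℝ} {C : ℝ}
    (h : ∀ i j, |A i j| ≤ C) : |A.det| ≤ n ! * C ^ n := by
  simpa using Matrix.det_le (abv := AbsoluteValue.abs) h

section OrderedSimplex

variable {n : ℕ}

theorem measurableSet_orderedSimplex (n : ℕ) : MeasurableSet (orderedSimplex n) := by
  simp only [orderedSimplex, StrictMono, Set.ofPred_and, Set.ofPred_forall]
  measurability

theorem volume_orderedSimplex_lt_top (n : ℕ) : volume (orderedSimplex n) < ⊤ :=
  (measure_mono (t := Icc 0 1) fun _ ht => ⟨fun i => (ht.2 i).1, fun i => (ht.2 i).2⟩).trans_lt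
    measure_Icc_lt_top

theorem integrableOn_orderedSimplex_of_abs_le {F : (Fin n → ℝ) → ℝ} (hF : Measurable F) {C : ℝ}
    (hC : ∀ t ∈ orderedSimplex n, |F t| ≤ C) : IntegrableOn F (orderedSimplex n) :=
  Measure.integrableOn_of_bounded (volume_orderedSimplex_lt_top n).ne hF.aestronglyMeasurable
    (ae_restrict_of_forall_mem (measurableSet_orderedSimplex n) hC)

theorem insertNth_mem_orderedSimplex_iff (p : Fin (n + 1)) (u : ℝ) (s : Fin n → ℝ) :
    p.insertNth u s ∈ orderedSimplex (n + 1) ↔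
      s ∈ orderedSimplex n ∧ u ∈ Icc (0 : ℝ) 1 ∧
        (∀ i, i.castSucc < p → s i < u) ∧ ∀ i, p ≤ i.castSucc → u < s i := by
  simp only [orderedSimplex, mem_ofPred_eq, Fin.strictMono_insertNth_iff,
    Fin.forall_iff_succAbove p, Fin.insertNth_apply_same, Fin.insertNth_apply_succAbove]
  tauto

/-- `partitionPoint s` lists `0, s 0, …, s (n - 1), 1`, the endpoints of the `n + 1` gaps of `s`,
and stays `1` beyond index `n + 1`. -/
def partitionPoint (s : Fin n → ℝ) : ℕ → ℝ
  | 0 => 0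
  | q + 1 => if h : q < n then s ⟨q, h⟩ else 1

@[simp] theorem partitionPoint_zero (s : Fin n → ℝ) : partitionPoint s 0 = 0 := rfl

theorem partitionPoint_succ_of_lt (s : Fin n → ℝ) {q : ℕ} (hq : q < n) :
    partitionPoint s (q + 1) = s ⟨q, hq⟩ := by
  simp [partitionPoint, hq]

@[simp] theorem partitionPoint_succ (s : Fin n → ℝ) (i : Fin n) :
    partitionPoint s (i + 1) = s i :=
  partitionPoint_succ_of_lt s i.isLt

@[simp] theorem partitionPoint_last (s : Fin n → ℝ) : partitionPoint s (n + 1) = 1 := by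
  simp [partitionPoint]

theorem measurable_partitionPoint (q : ℕ) : Measurable fun s : Fin n → ℝ => partitionPoint s q := by
  rcases q with _ | q
  · exact measurable_const
  · simp only [partitionPoint]
    split_ifs
    · exact measurable_pi_apply _
    · exact measurable_const

theorem partitionPoint_mono {s : Fin n → ℝ} (hs : s ∈ orderedSimplex n) {q r : ℕ} (hqr : q ≤ r)
    (hr : r ≤ n + 1) : partitionPoint s q ≤ partitionPoint s r := by
  rcases q with _ | q <;> rcases r with _ | r
  · exact le_rfl
  · simp only [partitionPoint]
    split_ifs
    exacts [(hs.2 _).1, zero_le_one]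
  · omega
  · simp only [partitionPoint]
    split_ifs
    exacts [hs.1.monotone (Fin.mk_le_mk.2 (by omega)), (hs.2 _).2, by omega, le_rfl]

theorem partitionPoint_mem_Icc {s : Fin n → ℝ} (hs : s ∈ orderedSimplex n) {q : ℕ}
    (hq : q ≤ n + 1) : partitionPoint s q ∈ Icc (0 : ℝ) 1 :=
  ⟨partitionPoint_mono hs q.zero_le hq, (partitionPoint_mono hs hq le_rfl).trans_eq
    (partitionPoint_last s)⟩

end OrderedSimplex

section Slicing

variable {n : ℕ}

theorem Ioo_partitionPoint_subset_insertNth_preimage {s : Fin n → ℝ}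
    (hs : s ∈ orderedSimplex n) (p : Fin (n + 1)) :
    Ioo (partitionPoint s p) (partitionPoint s (p + 1)) ⊆
      (p.insertNth · s) ⁻¹' orderedSimplex (n + 1) := by
  intro u ⟨hlo, hhi⟩
  have hp := p.isLt
  refine (insertNth_mem_orderedSimplex_iff p u s).2 ⟨hs, ⟨?_, ?_⟩, fun i hi => ?_, fun i hi => ?_⟩
  · exact (partitionPoint_mem_Icc hs (by omega)).1.trans hlo.le
  · exact hhi.le.trans (partitionPoint_mem_Icc hs (by omega)).2
  · rw [← partitionPoint_succ s i]
    exact (partitionPoint_mono hs (by simpa [Fin.lt_def] using hi) (by omega)).trans_lt hlo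
  · rw [← partitionPoint_succ s i]
    exact hhi.trans_le (partitionPoint_mono hs (by simpa [Fin.le_def] using hi) (by omega))

theorem insertNth_preimage_subset_Icc_partitionPoint (s : Fin n → ℝ) (p : Fin (n + 1)) :
    (p.insertNth · s) ⁻¹' orderedSimplex (n + 1) ⊆
      Icc (partitionPoint s p) (partitionPoint s (p + 1)) := by
  intro u hu
  obtain ⟨-, hu01, hbelow, habove⟩ := (insertNth_mem_orderedSimplex_iff p u s).1 hu
  constructor
  · rcases p with ⟨_ | q, hq⟩
    · exact hu01.1
    · rw [partitionPoint_succ_of_lt s (by omega)]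
      exact (hbelow ⟨q, by omega⟩ (by simp [Fin.lt_def])).le
  · by_cases hp : (p : ℕ) < n
    · rw [partitionPoint_succ_of_lt s hp]
      exact (habove ⟨p, hp⟩ le_rfl).le
    · rw [show (p : ℕ) = n by omega, partitionPoint_last]
      exact hu01.2

theorem insertNth_preimage_orderedSimplex_ae_eq {s : Fin n → ℝ} (hs : s ∈ orderedSimplex n)
    (p : Fin (n + 1)) :
    Ioo (partitionPoint s p) (partitionPoint s (p + 1)) =ᵐ[volume]
      (p.insertNth · s) ⁻¹' orderedSimplex (n + 1) := by
  have hIcc := measure_mono (μ := volume) (insertNth_preimage_subset_Icc_partitionPoint s p)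
  refine ae_eq_of_subset_of_measure_ge (Ioo_partitionPoint_subset_insertNth_preimage hs p) ?_
    measurableSet_Ioo.nullMeasurableSet (hIcc.trans_lt measure_Icc_lt_top).ne
  rwa [Real.volume_Ioo, ← Real.volume_Icc]

theorem setIntegral_orderedSimplex_succ (p : Fin (n + 1)) {F : (Fin (n + 1) → ℝ) → ℝ}
    (hF : IntegrableOn F (orderedSimplex (n + 1))) :
    ∫ t in orderedSimplex (n + 1), F t =
      ∫ s in orderedSimplex n,
        ∫ u in partitionPoint s p..partitionPoint s (p + 1), F (p.insertNth u s) := by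
  let e := (MeasurableEquiv.piFinSuccAbove (fun _ => ℝ) p).symm
  have he : MeasurePreserving e (volume.prod volume) volume :=
    (volume_preserving_piFinSuccAbove (fun _ => ℝ) p).symm
  have he_apply (z : ℝ × (Fin n → ℝ)) : e z = p.insertNth z.1 z.2 := by
    ext j
    simp [e, MeasurableEquiv.piFinSuccAbove_symm_apply, Fin.insertNthEquiv_apply]
  have hΔ := measurableSet_orderedSimplex (n + 1)
  have hint : Integrable (fun z => (orderedSimplex (n + 1)).indicator F (e z))
      (volume.prod volume) :=
    (he.integrable_comp_emb e.measurableEmbedding).2 ((integrable_indicator_iff hΔ).2 hF)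
  rw [← integral_indicator hΔ, ← he.integral_comp', integral_prod_symm _ hint,
    ← integral_indicator (measurableSet_orderedSimplex n)]
  congr 1
  ext s
  simp only [he_apply]
  by_cases hs : s ∈ orderedSimplex n
  · have hfiber : MeasurableSet ((p.insertNth · s) ⁻¹' orderedSimplex (n + 1)) :=
      hΔ.preimage (by fun_prop)
    rw [indicator_of_mem hs, intervalIntegral.integral_of_le
      (partitionPoint_mono hs (Nat.le_succ _) (by omega)), integral_Ioc_eq_integral_Ioo,
      setIntegral_congr_set (insertNth_preimage_orderedSimplex_ae_eq hs p),
      ← integral_indicator hfiber]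
    rfl
  · rw [indicator_of_notMem hs]
    refine integral_eq_zero_of_ae (ae_of_all _ fun u => indicator_of_notMem ?_ _)
    exact fun hu => hs ((insertNth_mem_orderedSimplex_iff p u s).1 hu).1

theorem sum_intervalIntegral_partitionPoint (s : Fin n → ℝ) {f : ℝ → ℝ}
    (hf : ∀ a b, IntervalIntegrable f volume a b) :
    ∑ p : Fin (n + 1), ∫ u in partitionPoint s p..partitionPoint s (p + 1), f u =
      ∫ u in (0 : ℝ)..1, f u := by
  rw [Fin.sum_univ_eq_sum_range
      (fun q => ∫ u in partitionPoint s q..partitionPoint s (q + 1), f u),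
    intervalIntegral.sum_integral_adjacent_intervals fun _ _ => hf _ _,
    partitionPoint_zero, partitionPoint_last]

theorem measurable_intervalIntegral_partitionPoint {f : ℝ → ℝ}
    (hf : ∀ a b, IntervalIntegrable f volume a b) (q : ℕ) :
    Measurable fun s : Fin n → ℝ => ∫ u in partitionPoint s q..partitionPoint s (q + 1), f u := by
  have hprim := (intervalIntegral.continuous_primitive hf 0).measurable
  have hdiff : (fun s : Fin n → ℝ => ∫ u in partitionPoint s q..partitionPoint s (q + 1), f u) =
      fun s => (∫ u in (0 : ℝ)..partitionPoint s (q + 1), f u) -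
        ∫ u in (0 : ℝ)..partitionPoint s q, f u :=
    funext fun _ => (intervalIntegral.integral_interval_sub_left (hf _ _) (hf _ _)).symm
  rw [hdiff]
  exact (hprim.comp (measurable_partitionPoint _)).sub (hprim.comp (measurable_partitionPoint _))

theorem abs_intervalIntegral_partitionPoint_le {s : Fin n → ℝ} (hs : s ∈ orderedSimplex n)
    {f : ℝ → ℝ} {A : ℝ} (hfA : ∀ u, |f u| ≤ A) (p : Fin (n + 1)) :
    |∫ u in partitionPoint s p..partitionPoint s (p + 1), f u| ≤ A := by
  have hp := p.isLt
  have hle := partitionPoint_mono hs (Nat.le_succ p) (by omega)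
  have hlo := (partitionPoint_mem_Icc hs (q := p) (by omega)).1
  have hhi := (partitionPoint_mem_Icc hs (q := p + 1) (by omega)).2
  calc |∫ u in partitionPoint s p..partitionPoint s (p + 1), f u|
      ≤ A * |partitionPoint s (p + 1) - partitionPoint s p| := by
        simpa only [Real.norm_eq_abs] using
          intervalIntegral.norm_integral_le_of_norm_le_const fun u _ =>
            (Real.norm_eq_abs (f u)).trans_le (hfA u)
    _ ≤ A * 1 := by
        gcongr
        · exact (abs_nonneg _).trans (hfA 0)
        · rw [abs_of_nonneg (sub_nonneg.2 hle)]
          linarith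
    _ = A := mul_one A

end Slicing

theorem sum_setIntegral_orderedSimplex_mul_comp_succAbove {n : ℕ} {f : ℝ → ℝ}
    {g : (Fin n → ℝ) → ℝ} (hf : Measurable f) (hg : Measurable g) {A B : ℝ}
    (hfA : ∀ u, |f u| ≤ A) (hgB : ∀ s, |g s| ≤ B) :
    ∑ p : Fin (n + 1), ∫ t in orderedSimplex (n + 1), f (t p) * g (t ∘ p.succAbove) =
      (∫ u in (0 : ℝ)..1, f u) * ∫ s in orderedSimplex n, g s := by
  have hfint (a b : ℝ) : IntervalIntegrable f volume a b :=
    intervalIntegrable_const.mono_fun' hf.aestronglyMeasurable (ae_of_all _ hfA)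
  have hA : 0 ≤ A := (abs_nonneg _).trans (hfA 0)
  have hslice (p : Fin (n + 1)) :
      ∫ t in orderedSimplex (n + 1), f (t p) * g (t ∘ p.succAbove) =
        ∫ s in orderedSimplex n,
          (∫ u in partitionPoint s p..partitionPoint s (p + 1), f u) * g s := by
    rw [setIntegral_orderedSimplex_succ p]
    · simp only [Fin.insertNth_apply_same, Fin.insertNth_comp_succAbove,
        intervalIntegral.integral_mul_const]
    · refine integrableOn_orderedSimplex_of_abs_le (by fun_prop) (C := A * B) fun t _ => ?_
      rw [abs_mul]
      exact mul_le_mul (hfA _) (hgB _) (abs_nonneg _) hA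
  have hgap_integrable (p : Fin (n + 1)) : IntegrableOn
      (fun s => (∫ u in partitionPoint s p..partitionPoint s (p + 1), f u) * g s)
      (orderedSimplex n) := by
    refine integrableOn_orderedSimplex_of_abs_le
      ((measurable_intervalIntegral_partitionPoint hfint p).mul hg) (C := A * B) fun s hs => ?_
    rw [abs_mul]
    exact mul_le_mul (abs_intervalIntegral_partitionPoint_le hs hfA p) (hgB s) (abs_nonneg _) hA
  rw [Finset.sum_congr rfl fun p _ => hslice p,
    ← integral_finsetSum _ fun p _ => hgap_integrable p, ← integral_const_mul]
  refine setIntegral_congr_fun (measurableSet_orderedSimplex n) fun s hs => ?_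
  rw [← Finset.sum_mul, sum_intervalIntegral_partitionPoint s hfint]

theorem sum_neg_one_pow_mul_setIntegral_det {n : ℕ} {f : ℝ → Fin (n + 1) → ℝ}
    (hf : Measurable f) {C : ℝ} (hC : ∀ u i, |f u i| ≤ C) :
    (∑ p : Fin (n + 1), (-1 : ℝ) ^ (p : ℕ)) *
        ∫ t in orderedSimplex (n + 1), (Matrix.of fun i j => f (t j) i).det =
      ∑ i : Fin (n + 1), (-1 : ℝ) ^ (i : ℕ) * (∫ u in (0 : ℝ)..1, f u i) *
        ∫ s in orderedSimplex n, (Matrix.of fun a b => f (s b) (i.succAbove a)).det := by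
  set D : Fin (n + 1) → (Fin n → ℝ) → ℝ :=
    fun i s => (Matrix.of fun a b => f (s b) (i.succAbove a)).det
  have hD_meas (i : Fin (n + 1)) : Measurable (D i) := by
    simp only [D, Matrix.det_apply]
    fun_prop
  have hD_le (i : Fin (n + 1)) (s : Fin n → ℝ) : |D i s| ≤ n ! * C ^ n :=
    abs_det_le_of_forall_abs_le fun _ _ => hC _ _
  have hterm_integrable (i p : Fin (n + 1)) : IntegrableOn
      (fun t => f (t p) i * D i (t ∘ p.succAbove)) (orderedSimplex (n + 1)) := by
    refine integrableOn_orderedSimplex_of_abs_le (by fun_prop) (C := C * (n ! * C ^ n))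
      fun t _ => ?_
    rw [abs_mul]
    exact mul_le_mul (hC _ _) (hD_le _ _) (abs_nonneg _) ((abs_nonneg _).trans (hC 0 0))
  have hlaplace (p : Fin (n + 1)) (t : Fin (n + 1) → ℝ) :
      (-1 : ℝ) ^ (p : ℕ) * (Matrix.of fun i j => f (t j) i).det =
        ∑ i : Fin (n + 1), (-1 : ℝ) ^ (i : ℕ) * (f (t p) i * D i (t ∘ p.succAbove)) :=
    Matrix.neg_one_pow_mul_det_eq_sum _ p
  calc (∑ p : Fin (n + 1), (-1 : ℝ) ^ (p : ℕ)) *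
        ∫ t in orderedSimplex (n + 1), (Matrix.of fun i j => f (t j) i).det
      = ∑ p : Fin (n + 1), ∫ t in orderedSimplex (n + 1),
          ∑ i : Fin (n + 1), (-1 : ℝ) ^ (i : ℕ) * (f (t p) i * D i (t ∘ p.succAbove)) := by
        rw [Finset.sum_mul]
        refine Finset.sum_congr rfl fun p _ => ?_
        rw [← integral_const_mul]
        simp only [hlaplace]
    _ = ∑ i : Fin (n + 1), (-1 : ℝ) ^ (i : ℕ) * ∑ p : Fin (n + 1),
          ∫ t in orderedSimplex (n + 1), f (t p) i * D i (t ∘ p.succAbove) := by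
        simp only [Finset.mul_sum]
        rw [Finset.sum_comm]
        refine Finset.sum_congr rfl fun p _ => ?_
        rw [integral_finsetSum _ fun i _ => (hterm_integrable i p).const_mul _]
        simp only [integral_const_mul]
    _ = _ := by
        refine Finset.sum_congr rfl fun i _ => ?_
        rw [sum_setIntegral_orderedSimplex_mul_comp_succAbove (f := (f · i)) (by fun_prop)
          (hD_meas i) (hC · i) (hD_le i), mul_assoc]

section LipschitzPath

variable {d : ℕ} {K : NNReal} {y : ℝ → Fin d → ℝ}

theorem LipschitzWith.abs_deriv_apply_le (hy : LipschitzWith K y) (u : ℝ) (j : Fin d) :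
    |deriv y u j| ≤ K :=
  (norm_le_pi_norm (deriv y u) j).trans (norm_deriv_le_of_lipschitz hy)

theorem LipschitzWith.integral_deriv_apply (hy : LipschitzWith K y) (j : Fin d) (a b : ℝ) :
    ∫ u in a..b, deriv y u j = y b j - y a j := by
  have hyj : LipschitzWith K (y · j) := by
    simpa [Function.comp_def] using (LipschitzWith.eval j).comp hy
  rw [← hyj.lipschitzOnWith.absolutelyContinuousOnInterval.integral_deriv_eq_sub]
  refine intervalIntegral.integral_congr_ae ?_
  filter_upwards [hy.ae_differentiableAt_real] with u hu _
  exact (hasDerivAt_pi.1 hu.hasDerivAt j).deriv.symm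

theorem altSigEntry_congr {k : ℕ} {x : ℝ → Fin d → ℝ} (hxy : EqOn x y (Icc 0 1))
    (P : Fin k → Fin d) : altSigEntry d k x P = altSigEntry d k y P := by
  have hinterior : ∀ᵐ t : Fin k → ℝ, ∀ j, t j ≠ 0 ∧ t j ≠ 1 :=
    ae_all_iff.2 fun j => (Measure.quasiMeasurePreserving_eval (fun _ => volume) j).ae
      ((Measure.ae_ne volume 0).and (Measure.ae_ne volume 1))
  unfold altSigEntry
  congr 1
  refine setIntegral_congr_ae (measurableSet_orderedSimplex k) ?_
  filter_upwards [hinterior] with t ht htΔ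
  congr 2 with i j
  have htj : t j ∈ Ioo (0 : ℝ) 1 :=
    ⟨(htΔ.2 j).1.lt_of_ne' (ht j).1, (htΔ.2 j).2.lt_of_ne (ht j).2⟩
  rw [(eventuallyEq_of_mem (Icc_mem_nhds htj.1 htj.2) hxy).deriv_eq]

theorem LipschitzWith.sum_neg_one_pow_mul_altSigEntry {k : ℕ} (hy : LipschitzWith K y)
    (P : Fin (k + 1) → Fin d) :
    (∑ p : Fin (k + 1), (-1 : ℝ) ^ (p : ℕ)) * ((k + 1) * altSigEntry d (k + 1) y P) =
      ∑ i : Fin (k + 1), (-1 : ℝ) ^ (i : ℕ) * (y 1 (P i) - y 0 (P i)) *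
        altSigEntry d k y (P ∘ i.succAbove) := by
  have hdet := sum_neg_one_pow_mul_setIntegral_det (f := fun u i => deriv y u (P i))
    (by fun_prop) fun u i => hy.abs_deriv_apply_le u (P i)
  simp only [hy.integral_deriv_apply] at hdet
  have hfact : (k + 1 : ℝ) * (1 / ((k + 1)! : ℝ)) = 1 / (k ! : ℝ) := by
    rw [Nat.factorial_succ]
    push_cast
    field_simp
  simp only [altSigEntry, Function.comp_apply, ← mul_assoc, hfact]
  rw [mul_right_comm, hdet, Finset.sum_mul]
  refine Finset.sum_congr rfl fun i _ => ?_
  ring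

end LipschitzPath

theorem altSigEntry_odd_decomposition_general (d m : ℕ)
    (x : ℝ → Fin d → ℝ) (K : NNReal) (hlip : LipschitzOnWith K x (Icc 0 1))
    (P : Fin (2 * m + 1) → Fin d) :
    altSigEntry d (2 * m + 1) x P =
      (1 / (2 * m + 1 : ℝ)) * ∑ i : Fin (2 * m + 1),
        (-1 : ℝ) ^ (i : ℕ) * (x 1 (P i) - x 0 (P i)) *
          altSigEntry d (2 * m) x (P ∘ i.succAbove) := by
  obtain ⟨y, hy, hxy⟩ := hlip.extend_pi
  have hdecomp := hy.sum_neg_one_pow_mul_altSigEntry P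
  rw [Fin.sum_neg_one_pow_of_odd (odd_two_mul_add_one m), one_mul] at hdecomp
  simp only [altSigEntry_congr hxy, hxy (left_mem_Icc.2 zero_le_one),
    hxy (right_mem_Icc.2 zero_le_one)]
  rw [← hdecomp]
  push_cast
  field_simp

/-- odd-level decomposition of the alternating signature
`α_P(x) = (1/k) Σᵢ (-1)^(i+1) σ_{P(i)}(x) α_{P_i}(x)` for odd `k = 2m+1 ≤ d`, where
`P_i = P ∘ Fin.succAbove i` deletes the `i`-th index. -/
theorem altSigEntry_odd_decomposition (d m : ℕ) (hkd : 2 * m + 1 ≤ d)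
    (x : ℝ → Fin d → ℝ) (K : NNReal) (hlip : LipschitzOnWith K x (Icc 0 1))
    (P : Fin (2 * m + 1) → Fin d) (hP : StrictMono P) :
    altSigEntry d (2 * m + 1) x P =
      (1 / (2 * m + 1 : ℝ)) * ∑ i : Fin (2 * m + 1),
        (-1 : ℝ) ^ (i : ℕ) * (x 1 (P i) - x 0 (P i)) *
          altSigEntry d (2 * m) x (P ∘ i.succAbove) :=
  altSigEntry_odd_decomposition_general d m x K hlip P
end
end

section
/- Let x : [0,1] → ℝ² be the planar moment curve x(t) = (t, t²). Then the region Z = {(x,y) ∈ ℝ² : −4x² + 4x − 4y + 1 ≥ 0 and −4x² − 4x + 4y + 1 ≥ 0} has area 1/3, and the convex hull of the image of x has area 1/6, so vol(Z) = 2 · vol(conv(x)). -/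
open MeasureTheory Set

/-! Both regions lie between the graphs of two quadratics over an interval, so their areas are
one-variable integrals. The zonoid is bounded by `y = x² + x - 1/4` and `y = -x² + x + 1/4` over
`[-1/2, 1/2]`, giving `∫ (1/2 - 2x²) = 1/3`; the convex hull of the parabolic arc is the lens
between `y = x²` and its chord `y = x` over `[0, 1]`, giving `∫ (x - x²) = 1/6`. -/

section RegionBetween

variable {α : Type*} [MeasurableSpace α] {μ : Measure α} {f g : α → ℝ} {s : Set α}

theorem volume_region_between_cc_eq_volume_regionBetween [SFinite μ] (hf : Measurable f)
    (hg : Measurable g) (hs : MeasurableSet s) :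
    μ.prod volume {p : α × ℝ | p.1 ∈ s ∧ p.2 ∈ Icc (f p.1) (g p.1)} =
      μ.prod volume (regionBetween f g s) := by
  rw [Measure.prod_apply (measurableSet_region_between_cc hf hg hs),
    Measure.prod_apply (measurableSet_regionBetween hf hg hs)]
  congr 1 with x
  by_cases hx : x ∈ s
  · simp only [regionBetween, hx, true_and, preimage_ofPred_eq]
    exact (Real.volume_Icc (a := f x) (b := g x)).trans Real.volume_Ioo.symm
  · simp [regionBetween, hx]

end RegionBetween

theorem volume_fin_two_region_between_cc {f g : ℝ → ℝ} {a b : ℝ} (hf : Continuous f)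
    (hg : Continuous g) (hab : a ≤ b) (hfg : ∀ x ∈ Icc a b, f x ≤ g x) :
    volume {p : Fin 2 → ℝ | p 0 ∈ Icc a b ∧ p 1 ∈ Icc (f (p 0)) (g (p 0))} =
      ENNReal.ofReal (∫ x in a..b, g x - f x) := by
  have hT := measurableSet_region_between_cc hf.measurable hg.measurable
    (measurableSet_Icc (a := a) (b := b))
  refine ((volume_preserving_finTwoArrow ℝ).measure_preimage hT.nullMeasurableSet).trans ?_
  rw [Measure.volume_eq_prod,
    volume_region_between_cc_eq_volume_regionBetween hf.measurable hg.measurable measurableSet_Icc,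
    volume_regionBetween_eq_integral hf.integrableOn_Icc hg.integrableOn_Icc measurableSet_Icc hfg,
    integral_Icc_eq_integral_Ioc, intervalIntegral.integral_of_le hab]
  rfl

theorem convex_parabolic_lens :
    Convex ℝ {p : Fin 2 → ℝ | p 0 ∈ Icc 0 1 ∧ p 1 ∈ Icc (p 0 ^ 2) (p 0)} := by
  rintro p ⟨⟨hp₀, hp₁⟩, hp₂, hp₃⟩ q ⟨⟨hq₀, hq₁⟩, hq₂, hq₃⟩ a b ha hb hab
  simp only [mem_ofPred_eq, mem_Icc, Pi.add_apply, Pi.smul_apply, smul_eq_mul]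
  obtain rfl : a = 1 - b := by linarith
  refine ⟨⟨by positivity, by nlinarith⟩, ?_, by nlinarith⟩
  nlinarith [mul_nonneg (mul_nonneg ha hb) (sq_nonneg (p 0 - q 0))]

theorem convexHull_moment_curve :
    convexHull ℝ ((fun t : ℝ => ![t, t ^ 2]) '' Icc 0 1) =
      {p : Fin 2 → ℝ | p 0 ∈ Icc 0 1 ∧ p 1 ∈ Icc (p 0 ^ 2) (p 0)} := by
  refine (convexHull_min ?_ convex_parabolic_lens).antisymm ?_
  · rintro _ ⟨t, ⟨ht₀, ht₁⟩, rfl⟩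
    simp only [mem_ofPred_eq, mem_Icc, Matrix.cons_val_zero, Matrix.cons_val_one]
    exact ⟨⟨ht₀, ht₁⟩, le_rfl, by nlinarith⟩
  rintro p ⟨ht, hp₁, hp₂⟩
  set C := convexHull ℝ ((fun t : ℝ => ![t, t ^ 2]) '' Icc 0 1)
  set t := p 0
  have hconv : Convex ℝ C := convex_convexHull ℝ _
  have hcurve : ∀ s ∈ Icc (0 : ℝ) 1, ![s, s ^ 2] ∈ C :=
    fun s hs => subset_convexHull ℝ _ ⟨s, hs, rfl⟩
  have hchord : ![t, t] ∈ C := by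
    convert hconv (hcurve 0 (by simp)) (hcurve 1 (by simp)) (sub_nonneg.2 ht.2) ht.1 (by ring)
      using 1
    ext i; fin_cases i <;> simp
  -- `p` lies on the vertical segment from `(t, t²)` on the curve up to `(t, t)` on the chord.
  obtain ⟨a, b, ha, hb, hab, hp⟩ : p 1 ∈ segment ℝ (t ^ 2) t := by
    rw [segment_eq_Icc (hp₁.trans hp₂)]
    exact ⟨hp₁, hp₂⟩
  convert hconv (hcurve t ht) hchord ha hb hab using 1
  ext i; fin_cases i
  · simp [← add_mul, hab, t]
  · simpa using hp.symm

-- The two boundary parabolas meet at `x = ±1/2`.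
theorem zonoid_moment_curve_eq_region_between :
    {p : Fin 2 → ℝ | 0 ≤ -4 * (p 0) ^ 2 + 4 * p 0 - 4 * p 1 + 1 ∧
      0 ≤ -4 * (p 0) ^ 2 - 4 * p 0 + 4 * p 1 + 1} =
      {p | p 0 ∈ Icc (-1 / 2) (1 / 2) ∧
        p 1 ∈ Icc (p 0 ^ 2 + p 0 - 1 / 4) (-p 0 ^ 2 + p 0 + 1 / 4)} := by
  ext p
  simp only [mem_ofPred_eq, mem_Icc]
  constructor
  · rintro ⟨h₁, h₂⟩
    exact ⟨⟨by nlinarith, by nlinarith⟩, by linarith, by linarith⟩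
  · rintro ⟨-, h₁, h₂⟩
    exact ⟨by linarith, by linarith⟩

/-- For the planar moment curve `x(t) = (t, t²)`, the zonoid
`Z = {(x,y) : -4x² + 4x - 4y + 1 ≥ 0, -4x² - 4x + 4y + 1 ≥ 0}` has area `1/3`, the
convex hull of the curve has area `1/6`, and `vol(Z) = 2 · vol(conv(x))`. -/
theorem zonoid_moment_curve (x : ℝ → Fin 2 → ℝ)
    (hx : x = fun t => ![t, t ^ 2])
    (Z : Set (Fin 2 → ℝ))
    (hZ : Z = {p | 0 ≤ -4 * (p 0) ^ 2 + 4 * p 0 - 4 * p 1 + 1 ∧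
      0 ≤ -4 * (p 0) ^ 2 - 4 * p 0 + 4 * p 1 + 1}) :
    (volume Z).toReal = 1 / 3 ∧
    (volume (convexHull ℝ (x '' Icc 0 1))).toReal = 1 / 6 ∧
    (volume Z).toReal = 2 * (volume (convexHull ℝ (x '' Icc 0 1))).toReal := by
  have hZ_vol : (volume Z).toReal = 1 / 3 := by
    rw [hZ, zonoid_moment_curve_eq_region_between,
      volume_fin_two_region_between_cc (f := fun u => u ^ 2 + u - 1 / 4)
        (g := fun u => -u ^ 2 + u + 1 / 4) (by fun_prop) (by fun_prop) (by norm_num)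
        fun u hu => by nlinarith [hu.1, hu.2]]
    simp only [show ∀ u : ℝ, -u ^ 2 + u + 1 / 4 - (u ^ 2 + u - 1 / 4) = 1 / 2 - 2 * u ^ 2
      from fun u => by ring]
    norm_num
  have hhull_vol : (volume (convexHull ℝ (x '' Icc 0 1))).toReal = 1 / 6 := by
    rw [hx, convexHull_moment_curve,
      volume_fin_two_region_between_cc (f := fun u => u ^ 2) (g := fun u => u) (by fun_prop)
        (by fun_prop) zero_le_one fun u hu => by nlinarith [hu.1, hu.2]]
    norm_num
  exact ⟨hZ_vol, hhull_vol, by rw [hZ_vol, hhull_vol]; norm_num⟩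
end
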